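/- arXiv:1301.0143 — 2 statements merged into one kernel-verified Lean document; each statement's English description precedes it below -/
import Mathlib

section
/- With the setting above, if u belongs to the set E = {u : u⁺ ∈ N and u⁻ ∈ N}, where N = {v ≠ 0 : ‖v‖_ε² = |v|_{p,ε}^p} and u⁺ = max{u,0}, u⁻ = min{u,0}, then dist_ε(u, P) ≥ ½ S_ε^{p/(2(p−2))}. Consequently, the tubular neighborhood B(ε, P) = {u : dist_ε(u, P) ≤ ½ S_ε^{p/(2(p−2))}} of the positive cone is disjoint from E. -/
/-- If `u` belongs to `E = {u : u⁺ ∈ N and u⁻ ∈ N}` (Nehari set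
`N = {v ≠ 0 : Nsob v ² = Np v ^ p}`), then `dist(u, P) ≥ ½ S^{p/(2(p-2))}`;
consequently the tube `B = {u : dist(u,P) ≤ ½ S^{p/(2(p-2))}}` around the
positive cone `P` is disjoint from `E`. -/
theorem stmt3 {H : Type*} [Lattice H] [AddCommGroup H]
    [CovariantClass H H (· + ·) (· ≤ ·)]
    (p S : ℝ) (hp : 2 < p) (hS : 0 < S)
    (Nsob Np : H → ℝ) (hNp0 : ∀ v, 0 ≤ Np v) (hNsob0 : ∀ v, 0 ≤ Nsob v)
    (hNpdef : ∀ v : H, v ≠ 0 → 0 < Np v)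
    (hsolid : ∀ a b : H, a ⊔ -a ≤ b ⊔ -b → Np a ≤ Np b)
    (hSob : ∀ v : H, Real.sqrt S * Np v ≤ Nsob v)
    (distP : H → ℝ)
    (hdist : ∀ w : H, distP w = sInf {r : ℝ | ∃ v : H, 0 ≤ v ∧ r = Nsob (w - v)})
    (Eset Bset : Set H)
    (hEset : Eset = {w : H | (w ⊔ 0 ≠ 0 ∧ Nsob (w ⊔ 0) ^ 2 = Np (w ⊔ 0) ^ p) ∧
      (w ⊓ 0 ≠ 0 ∧ Nsob (w ⊓ 0) ^ 2 = Np (w ⊓ 0) ^ p)})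
    (hBset : Bset = {w : H | distP w ≤ (1 / 2) * S ^ (p / (2 * (p - 2)))}) :
    (∀ w ∈ Eset, (1 / 2) * S ^ (p / (2 * (p - 2))) ≤ distP w) ∧
    Disjoint Bset Eset := by
  have hp2 : 0 < p - 2 := by linarith
  have hSe : (0:ℝ) < S ^ (p / (2 * (p - 2))) := Real.rpow_pos_of_pos hS _
  have key : ∀ w ∈ Eset, S ^ (p / (2 * (p - 2))) ≤ distP w := by
    intro w hw
    rw [hEset] at hw
    obtain ⟨-, hne, hNeh⟩ := hw
    set a := Np (w ⊓ 0) with ha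
    have ha0 : 0 < a := hNpdef _ hne
    have h := hSob (w ⊓ 0)
    rw [← ha] at h
    have hsq : S * a ^ 2 ≤ Nsob (w ⊓ 0) ^ 2 := by
      have h6 : (Real.sqrt S * a) * (Real.sqrt S * a) ≤
          Nsob (w ⊓ 0) * Nsob (w ⊓ 0) :=
        mul_le_mul h h (by positivity) (hNsob0 _)
      have h8 := Real.mul_self_sqrt hS.le
      have h7 : (Real.sqrt S * a) * (Real.sqrt S * a) = S * a ^ 2 := by
        linear_combination (a ^ 2) * h8
      nlinarith [h6, h7]
    have hap : Nsob (w ⊓ 0) ^ 2 = a ^ 2 * a ^ (p - 2) := by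
      rw [hNeh, ← Real.rpow_natCast a 2, ← Real.rpow_add ha0]
      norm_num
    have hSle : S ≤ a ^ (p - 2) := by
      have h2 : S * a ^ 2 ≤ a ^ 2 * a ^ (p - 2) := by rw [← hap]; exact hsq
      have ha2 : (0:ℝ) < a ^ 2 := by positivity
      exact le_of_mul_le_mul_right (by linarith) ha2
    have haS : S ^ ((p - 2)⁻¹) ≤ a := by
      calc S ^ ((p - 2)⁻¹) ≤ (a ^ (p - 2)) ^ ((p - 2)⁻¹) :=
            Real.rpow_le_rpow hS.le hSle (by positivity)
        _ = a := by
            rw [← Real.rpow_mul ha0.le, mul_inv_cancel₀ hp2.ne', Real.rpow_one]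
    have hlb : ∀ r ∈ {r : ℝ | ∃ v : H, 0 ≤ v ∧ r = Nsob (w - v)},
        Real.sqrt S * a ≤ r := by
      rintro r ⟨v, hv, rfl⟩
      have hposabs : (0:H) ≤ (w - v) ⊔ -(w - v) := abs_nonneg (w - v)
      have habs : (w ⊓ 0) ⊔ -(w ⊓ 0) ≤ (w - v) ⊔ -(w - v) := by
        have h1 : w ⊓ 0 ≤ (w - v) ⊔ -(w - v) := le_trans inf_le_right hposabs
        have h2 : -(w ⊓ 0) ≤ (w - v) ⊔ -(w - v) := by
          rw [neg_inf, neg_zero]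
          refine sup_le ?_ hposabs
          have h3 : -w ≤ -(w - v) := by
            rw [neg_sub, sub_eq_add_neg]
            calc -w = 0 + -w := (zero_add _).symm
              _ ≤ v + -w := add_le_add_left hv _
          exact h3.trans le_sup_right
        exact sup_le h1 h2
      have h4 : Np (w ⊓ 0) ≤ Np (w - v) := hsolid _ _ habs
      have h5 := hSob (w - v)
      nlinarith [Real.sqrt_nonneg S]
    have hne' : {r : ℝ | ∃ v : H, 0 ≤ v ∧ r = Nsob (w - v)}.Nonempty :=
      ⟨Nsob (w - 0), 0, le_refl 0, rfl⟩
    have hdistlb : Real.sqrt S * a ≤ distP w := by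
      rw [hdist]
      exact le_csInf hne' hlb
    have hsqrt : Real.sqrt S = S ^ ((1:ℝ)/2) := Real.sqrt_eq_rpow S
    have hfin : S ^ (p / (2 * (p - 2))) ≤ Real.sqrt S * a := by
      calc S ^ (p / (2 * (p - 2))) = S ^ ((1:ℝ)/2 + (p - 2)⁻¹) := by
            congr 1
            field_simp
            try ring
        _ = S ^ ((1:ℝ)/2) * S ^ ((p - 2)⁻¹) := Real.rpow_add hS _ _
        _ ≤ Real.sqrt S * a := by
            rw [← hsqrt]
            exact mul_le_mul_of_nonneg_left haS (Real.sqrt_nonneg S)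
    linarith
  constructor
  · intro w hw
    have := key w hw
    linarith
  · rw [Set.disjoint_left]
    intro w hwB hwE
    rw [hBset] at hwB
    have := key w hwE
    simp only [Set.mem_setOf_eq] at hwB
    linarith
end

section
/- In the setting of the previous statement, suppose additionally that u ↦ N(u)^{1/p} defines a norm |·|_p with S^{1/2}|u|_p ≤ ‖u‖. If (u_k) is a sequence with ‖u_k‖ bounded, ‖∇J(u_k)‖ → 0, and each u_k sign-changing in the sense that there is a decomposition u_k = u_k⁺ + u_k⁻ with J'(u_k)u_k^± = ‖u_k^±‖² − |u_k^±|_p^p, and |u_k^±|_p^p ≥ S^{p/(p−2)} bounded below away from 0, then the scaling factors t_k^± = (‖u_k^±‖²/|u_k^±|_p^p)^{1/(p−2)} converge to 1 and dist(u_k^±, N) ≤ ‖u_k^± − t_k^± u_k^±‖ → 0, where N is the Nehari set. -/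
open Filter

lemma stmt6_aux {H : Type*} [NormedAddCommGroup H] [InnerProductSpace ℝ H]
    (p S C : ℝ) (hp : 2 < p) (hS : 0 < S)
    (Np : H → ℝ) (a : ℕ → H)
    (haC : ∀ k, ‖a k‖ ≤ C)
    (ha : Tendsto (fun k => ‖a k‖ ^ 2 - Np (a k) ^ p) atTop (nhds 0))
    (halow : ∀ k, S ^ (p / (p - 2)) ≤ Np (a k) ^ p)
    (t : ℕ → ℝ)
    (ht : ∀ k, t k = (‖a k‖ ^ 2 / Np (a k) ^ p) ^ (1 / (p - 2))) :
    Tendsto t atTop (nhds 1) ∧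
    Tendsto (fun k => ‖a k - t k • a k‖) atTop (nhds 0) := by
  set δ := S ^ (p / (p - 2)) with hδdef
  have hδ : 0 < δ := Real.rpow_pos_of_pos hS _
  have hd : ∀ k, 0 < Np (a k) ^ p := fun k => lt_of_lt_of_le hδ (halow k)
  -- ratio tends to 1
  have hr : Tendsto (fun k => ‖a k‖ ^ 2 / Np (a k) ^ p) atTop (nhds 1) := by
    rw [tendsto_iff_dist_tendsto_zero]
    have hbound : ∀ k,
        dist (‖a k‖ ^ 2 / Np (a k) ^ p) 1 ≤ |‖a k‖ ^ 2 - Np (a k) ^ p| / δ := by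
      intro k
      rw [Real.dist_eq]
      have h1 : ‖a k‖ ^ 2 / Np (a k) ^ p - 1
          = (‖a k‖ ^ 2 - Np (a k) ^ p) / Np (a k) ^ p := by
        rw [div_sub_one (hd k).ne']
      rw [h1, abs_div, abs_of_pos (hd k)]
      gcongr
      exact halow k
    have hlim : Tendsto (fun k => |‖a k‖ ^ 2 - Np (a k) ^ p| / δ) atTop (nhds 0) := by
      have := (ha.abs).div_const δ
      simpa using this
    exact squeeze_zero (fun k => dist_nonneg) hbound hlim
  have htend : Tendsto t atTop (nhds 1) := by
    have := hr.rpow_const (p := 1 / (p - 2)) (Or.inl one_ne_zero)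
    rw [Real.one_rpow] at this
    have heq : (fun k => (‖a k‖ ^ 2 / Np (a k) ^ p) ^ (1 / (p - 2))) = t := by
      funext k; rw [ht k]
    rwa [heq] at this
  refine ⟨htend, ?_⟩
  have hnorm : ∀ k, ‖a k - t k • a k‖ = |1 - t k| * ‖a k‖ := by
    intro k
    rw [show a k - t k • a k = (1 - t k) • a k by rw [sub_smul, one_smul],
      norm_smul, Real.norm_eq_abs]
  have hbound : ∀ k, ‖a k - t k • a k‖ ≤ |1 - t k| * C := by
    intro k
    rw [hnorm k]
    exact mul_le_mul_of_nonneg_left (haC k) (abs_nonneg _)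
  have hlim : Tendsto (fun k => |1 - t k| * C) atTop (nhds 0) := by
    have := (((tendsto_const_nhds (x := (1:ℝ))).sub htend).abs).mul_const C
    simpa using this
  exact squeeze_zero (fun k => norm_nonneg _) hbound hlim

/-- If `(a k)`, `(b k)` (the positive/negative parts of a
Palais-Smale sequence of sign-changing functions) are bounded, satisfy
`‖·‖² - Np(·)^p → 0`, and `Np(·)^p` is bounded below by `S^{p/(p-2)} > 0`,
then the Nehari scaling factors tend to `1` and
`dist(a k, N) ≤ ‖a k - t k • a k‖ → 0` (and similarly for `b`). -/
theorem stmt6 {H : Type*} [NormedAddCommGroup H] [InnerProductSpace ℝ H]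
    (p S C : ℝ) (hp : 2 < p) (hS : 0 < S)
    (Np : H → ℝ) (hNp0 : ∀ v, 0 ≤ Np v)
    (hSob : ∀ v : H, Real.sqrt S * Np v ≤ ‖v‖)
    (a b : ℕ → H)
    (haC : ∀ k, ‖a k‖ ≤ C) (hbC : ∀ k, ‖b k‖ ≤ C)
    (ha : Tendsto (fun k => ‖a k‖ ^ 2 - Np (a k) ^ p) atTop (nhds 0))
    (hb : Tendsto (fun k => ‖b k‖ ^ 2 - Np (b k) ^ p) atTop (nhds 0))
    (halow : ∀ k, S ^ (p / (p - 2)) ≤ Np (a k) ^ p)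
    (hblow : ∀ k, S ^ (p / (p - 2)) ≤ Np (b k) ^ p)
    (t s : ℕ → ℝ)
    (ht : ∀ k, t k = (‖a k‖ ^ 2 / Np (a k) ^ p) ^ (1 / (p - 2)))
    (hs : ∀ k, s k = (‖b k‖ ^ 2 / Np (b k) ^ p) ^ (1 / (p - 2))) :
    Tendsto t atTop (nhds 1) ∧ Tendsto s atTop (nhds 1) ∧
    Tendsto (fun k => ‖a k - t k • a k‖) atTop (nhds 0) ∧
    Tendsto (fun k => ‖b k - s k • b k‖) atTop (nhds 0) := by
  obtain ⟨h1, h2⟩ := stmt6_aux p S C hp hS Np a haC ha halow t ht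
  obtain ⟨h3, h4⟩ := stmt6_aux p S C hp hS Np b hbC hb hblow s hs
  exact ⟨h1, h3, h2, h4⟩
end
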